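/- Let A₀ be a nonnegative self-adjoint operator p(t)-homogeneous with respect to a family of unitary operators {U_t} closed under adjoints, and suppose A is a nonnegative densely defined symmetric operator with A ⊂ A₀ and U_t A = p(t) A U_t. Then (p(t)A₀ + I)(A₀ + I)⁻¹ U_t maps ker(A* + I) onto ker(A* + I) for every t ∈ 𝔗. -/

import Mathlib

open InnerProductSpace

/-- `p(t)`-homogeneity for unbounded operators. -/
def IsPtHomogeneous {H : Type*} [NormedAddCommGroup H] [InnerProductSpace ℂ H]
    {T : Type*} (U : T → (H ≃ₗᵢ[ℂ] H)) (p : T → ℝ) (A : H →ₗ.[ℂ] H) : Prop :=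
  ∀ t : T, (∀ x : H, x ∈ A.domain ↔ U t x ∈ A.domain) ∧
    ∀ (x : H) (hx : x ∈ A.domain) (hx' : U t x ∈ A.domain),
      U t (A ⟨x, hx⟩) = (p t : ℂ) • A ⟨U t x, hx'⟩

/-!
Write `ker (c A* + I)` as `(ran (c A + I))ᗮ`. From `U_t A = p(t) A U_t` the unitary `U_t` carries
`ran (A + I)` onto `ran (p(t) A + I)`, hence `ker (A* + I)` onto `ker (p(t) A* + I)`. For the
symmetric extension `A₀` and real `a, b` one has
`⟪(a A₀ + I) u, (b A₀ + I) v⟫ = ⟪(b A₀ + I) u, (a A₀ + I) v⟫`, so `(A₀ + I) u ⊥ ran (p A + I)`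
iff `(p A₀ + I) u ⊥ ran (A + I)`: the operator
`(p A₀ + I)(A₀ + I)⁻¹` carries `ker (p A* + I)` onto `ker (A* + I)`. That `p(t) A₀ + I` is onto
follows from `A₀ + I` being onto by conjugating with `U_t`.
-/

noncomputable section

variable {H : Type*} [NormedAddCommGroup H] [InnerProductSpace ℂ H]

namespace LinearPMap

def scaledAddId (A : H →ₗ.[ℂ] H) (c : ℝ) : A.domain →ₗ[ℂ] H :=
  (c : ℂ) • A.toFun + A.domain.subtype

/-- `ker (c A* + I)`, as `(ran (c A + I))ᗮ`; for `p ≠ 0` it is the paper's `ker (A* + (1/p) I)`. -/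
def defectSpace (A : H →ₗ.[ℂ] H) (c : ℝ) : Submodule ℂ H :=
  (LinearMap.range (A.scaledAddId c))ᗮ

variable {A A₀ : H →ₗ.[ℂ] H}

@[simp]
theorem scaledAddId_apply (c : ℝ) (x : A.domain) : A.scaledAddId c x = (c : ℂ) • A x + x := rfl

theorem scaledAddId_of_le (hle : A ≤ A₀) (c : ℝ) (x : A.domain) :
    A.scaledAddId c x = A₀.scaledAddId c (Submodule.inclusion hle.1 x) := by
  rw [scaledAddId_apply, scaledAddId_apply,
    hle.2 (x := x) (y := Submodule.inclusion hle.1 x) rfl]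
  rfl

theorem mem_defectSpace_iff {c : ℝ} {y : H} :
    y ∈ A.defectSpace c ↔ ∀ x : A.domain, inner ℂ y (A.scaledAddId c x) = 0 := by
  simp only [defectSpace, Submodule.mem_orthogonal', LinearMap.mem_range, forall_exists_index,
    forall_apply_eq_imp_iff]

theorem coe_defectSpace_one [CompleteSpace H] (hA : Dense (A.domain : Set H)) :
    (A.defectSpace 1 : Set H) =
      {y : H | ∃ hy : y ∈ A.adjoint.domain, A.adjoint ⟨y, hy⟩ = -y} := by
  ext y
  have hweak :
      y ∈ A.defectSpace 1 ↔ ∀ x : A.domain, inner ℂ (-y) (x : H) = inner ℂ y (A x) := by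
    simp only [mem_defectSpace_iff, scaledAddId_apply, Complex.ofReal_one, one_smul,
      inner_add_right, inner_neg_left]
    exact forall_congr' fun x => by rw [add_eq_zero_iff_eq_neg, eq_comm]
  simp only [SetLike.mem_coe, Set.mem_ofPred_eq, hweak]
  constructor
  · intro h
    have hy := mem_adjoint_domain_of_exists y ⟨-y, h⟩
    exact ⟨hy, adjoint_apply_eq hA ⟨y, hy⟩ h⟩
  · rintro ⟨hy, hAy⟩ x
    rw [← hAy]
    exact adjoint_isFormalAdjoint hA ⟨y, hy⟩ x

theorem IsFormalAdjoint.inner_scaledAddId_comm (hA : A.IsFormalAdjoint A) (a b : ℝ)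
    (u v : A.domain) :
    inner ℂ (A.scaledAddId a u) (A.scaledAddId b v) =
      inner ℂ (A.scaledAddId b u) (A.scaledAddId a v) := by
  have hsymm := hA u v
  simp only [scaledAddId_apply, inner_add_left, inner_add_right, inner_smul_left,
    inner_smul_right, Complex.conj_ofReal] at hsymm ⊢
  rw [hsymm]
  ring

theorem scaledAddId_mem_defectSpace_comm (hle : A ≤ A₀) (hA₀ : A₀.IsFormalAdjoint A₀) (a b : ℝ)
    (x₀ : A₀.domain) :
    A₀.scaledAddId a x₀ ∈ A.defectSpace b ↔ A₀.scaledAddId b x₀ ∈ A.defectSpace a := by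
  simp only [mem_defectSpace_iff, scaledAddId_of_le hle, hA₀.inner_scaledAddId_comm a b]

theorem image_defectSpace_of_comp_scaledAddId (hle : A ≤ A₀) (hA₀ : A₀.IsFormalAdjoint A₀)
    {a b : ℝ} {G : H → H} (hG : ∀ x : A₀.domain, G (A₀.scaledAddId a x) = A₀.scaledAddId b x)
    (ha : LinearMap.range (A₀.scaledAddId a) = ⊤) (hb : LinearMap.range (A₀.scaledAddId b) = ⊤) :
    G '' A.defectSpace b = A.defectSpace a := by
  ext y
  constructor
  · rintro ⟨z, hz, rfl⟩
    obtain ⟨x₀, rfl⟩ := LinearMap.range_eq_top.1 ha z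
    rw [hG]
    exact (scaledAddId_mem_defectSpace_comm hle hA₀ a b x₀).1 hz
  · intro hy
    obtain ⟨x₀, rfl⟩ := LinearMap.range_eq_top.1 hb y
    exact ⟨_, (scaledAddId_mem_defectSpace_comm hle hA₀ a b x₀).2 hy, hG x₀⟩

end LinearPMap

namespace IsPtHomogeneous

variable {T : Type*} {U : T → (H ≃ₗᵢ[ℂ] H)} {p : T → ℝ} {A : H →ₗ.[ℂ] H}

theorem map_domain (hA : IsPtHomogeneous U p A) (t : T) :
    A.domain.map ((U t).toLinearEquiv : H →ₗ[ℂ] H) = A.domain := by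
  ext y
  refine ⟨?_, fun hy => ⟨(U t).symm y, ?_, (U t).apply_symm_apply y⟩⟩
  · rintro ⟨x, hx, rfl⟩
    exact ((hA t).1 x).1 hx
  · rw [SetLike.mem_coe, (hA t).1, (U t).apply_symm_apply]
    exact hy

def domainEquiv (hA : IsPtHomogeneous U p A) (t : T) : A.domain ≃ₗ[ℂ] A.domain :=
  (U t).toLinearEquiv.ofSubmodules A.domain A.domain (hA.map_domain t)

theorem map_apply (hA : IsPtHomogeneous U p A) (t : T) (x : A.domain) :
    U t (A x) = (p t : ℂ) • A (hA.domainEquiv t x) :=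
  (hA t).2 x x.2 _

theorem map_range_scaledAddId (hA : IsPtHomogeneous U p A) (t : T) (c : ℝ) :
    (LinearMap.range (A.scaledAddId c)).map ((U t).toLinearEquiv : H →ₗ[ℂ] H) =
      LinearMap.range (A.scaledAddId (c * p t)) := by
  have hcomm : ((U t).toLinearEquiv : H →ₗ[ℂ] H) ∘ₗ A.scaledAddId c =
      A.scaledAddId (c * p t) ∘ₗ (hA.domainEquiv t : A.domain →ₗ[ℂ] A.domain) := by
    ext x
    simp only [LinearMap.comp_apply, LinearEquiv.coe_coe, LinearIsometryEquiv.coe_toLinearEquiv,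
      LinearPMap.scaledAddId_apply, map_add, map_smul, hA.map_apply, smul_smul,
      Complex.ofReal_mul]
    rfl
  rw [← LinearMap.range_comp, hcomm, LinearEquiv.range_comp]

theorem image_defectSpace (hA : IsPtHomogeneous U p A) (t : T) (c : ℝ) :
    U t '' A.defectSpace c = A.defectSpace (c * p t) := by
  rw [LinearPMap.defectSpace, LinearPMap.defectSpace, ← hA.map_range_scaledAddId,
    ← Submodule.map_orthogonal_equiv]
  rfl

end IsPtHomogeneous

end

open LinearPMap

theorem GtUt_maps_defect_onto_defect_general
    {H : Type*} [NormedAddCommGroup H] [InnerProductSpace ℂ H] [CompleteSpace H]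
    {T : Type*} (U : T → (H ≃ₗᵢ[ℂ] H)) (p : T → ℝ)
    (A : H →ₗ.[ℂ] H) (hAdense : Dense (A.domain : Set H))
    (hAhom : IsPtHomogeneous U p A)
    (A₀ : H →ₗ.[ℂ] H) (hle : A ≤ A₀)
    (hsa : A₀.adjoint = A₀)
    (hhom : IsPtHomogeneous U p A₀)
    -- `G t = (p(t)A₀ + I)(A₀ + I)⁻¹` :
    (G : T → (H →L[ℂ] H))
    (hG : ∀ (t : T) (x : A₀.domain), G t (A₀ x + (x : H)) = (p t : ℂ) • A₀ x + (x : H))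
    (hsurj : ∀ y : H, ∃ x : A₀.domain, A₀ x + (x : H) = y) :
    ∀ t : T,
      (fun y => G t (U t y)) ''
          {y : H | ∃ hy : y ∈ A.adjoint.domain, A.adjoint ⟨y, hy⟩ = -y}
        = {y : H | ∃ hy : y ∈ A.adjoint.domain, A.adjoint ⟨y, hy⟩ = -y} := by
  intro t
  have hA₀ : A₀.IsFormalAdjoint A₀ := by
    simpa only [hsa] using adjoint_isFormalAdjoint (hAdense.mono hle.1)
  have hran₁ : LinearMap.range (A₀.scaledAddId 1) = ⊤ :=
    LinearMap.range_eq_top.2 fun y => by simpa using hsurj y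
  have hranp : LinearMap.range (A₀.scaledAddId (p t)) = ⊤ := by
    rw [← one_mul (p t), ← hhom.map_range_scaledAddId, hran₁, Submodule.map_top,
      LinearEquiv.range]
  rw [← coe_defectSpace_one hAdense, ← Set.image_image, hAhom.image_defectSpace, one_mul,
    image_defectSpace_of_comp_scaledAddId hle hA₀ (fun x => by simpa using hG t x) hran₁ hranp]

/-- for a nonnegative symmetric `p(t)`-homogeneous operator `A`
with nonnegative self-adjoint `p(t)`-homogeneous extension `A₀`, the operator
`(p(t)A₀ + I)(A₀ + I)⁻¹ U_t` maps `ker(A* + I)` onto `ker(A* + I)`. -/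
theorem GtUt_maps_defect_onto_defect
    {H : Type*} [NormedAddCommGroup H] [InnerProductSpace ℂ H] [CompleteSpace H]
    {T : Type*} (U : T → (H ≃ₗᵢ[ℂ] H)) (g : T → T) (p : T → ℝ)
    (hadj : ∀ (t : T) (x y : H), (inner ℂ (U t x) y : ℂ) = inner ℂ x (U (g t) y))
    (hp : ∀ t, 0 < p t)
    (A : H →ₗ.[ℂ] H) (hAdense : Dense (A.domain : Set H))
    (hAclosed : A.IsClosed)
    (hAsym : ∀ x y : A.domain, (inner ℂ (A x) (y : H) : ℂ) = inner ℂ (x : H) (A y))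
    (hAnonneg : ∀ x : A.domain, 0 ≤ (inner ℂ (x : H) (A x) : ℂ).re)
    (hAhom : IsPtHomogeneous U p A)
    (A₀ : H →ₗ.[ℂ] H) (hle : A ≤ A₀)
    (hsa : A₀.adjoint = A₀)
    (hnonneg : ∀ x : A₀.domain, 0 ≤ (inner ℂ (x : H) (A₀ x) : ℂ).re)
    (hhom : IsPtHomogeneous U p A₀)
    -- `G t = (p(t)A₀ + I)(A₀ + I)⁻¹` :
    (G : T → (H →L[ℂ] H))
    (hG : ∀ (t : T) (x : A₀.domain), G t (A₀ x + (x : H)) = (p t : ℂ) • A₀ x + (x : H))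
    (hsurj : ∀ y : H, ∃ x : A₀.domain, A₀ x + (x : H) = y) :
    ∀ t : T,
      (fun y => G t (U t y)) ''
          {y : H | ∃ hy : y ∈ A.adjoint.domain, A.adjoint ⟨y, hy⟩ = -y}
        = {y : H | ∃ hy : y ∈ A.adjoint.domain, A.adjoint ⟨y, hy⟩ = -y} :=
  GtUt_maps_defect_onto_defect_general U p A hAdense hAhom A₀ hle hsa hhom G hG hsurj
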